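/- arXiv:2105.13966 — 3 statements merged into one kernel-verified Lean document; each statement's English description precedes it below -/
import Mathlib

section
/- Let β be a positive integer, let x_1,…,x_β be i.i.d. random variables with the arcsine distribution, and let d be uniform on {−1,+1}, independent of the x_k. Define the DCSK chips s_k = x_k for 1 ≤ k ≤ β and s_{β+k} = d·x_k for 1 ≤ k ≤ β, so that Σ_{k=1}^{2β} s_k = (1+d)·Σ_{k=1}^{β} x_k. Then the essential supremum of (Σ_{k=1}^{2β} s_k)² equals 4β², its expectation equals β, and hence the peak-to-average-power ratio (essential supremum divided by expectation) of the correlator output equals 4β. -/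
/-!
Write `S = ∑ k, x k`, so that the correlator output is `(1 + d) S`. Almost surely `|x k| < 1` and
`d = ±1`, hence `((1 + d) S)² ≤ (2β)²`. Conversely, for `r < 1` the event `{d = 1, x k > r ∀ k}`
has positive probability, being an intersection of independent events of positive probability,
and on it `((1 + d) S)² ≥ (2βr)²`; letting `r → 1` gives the essential supremum `4β²`.
For the mean, `S` is independent of `d`, so `E[((1 + d) S)²] = E[(1 + d)²] E[S²] = 2 · β/2`: the
arcsine law has mean `0` and second moment `1/2` (substitute `t = sin θ`), and the variances of
the independent `x k` add up.
-/

open MeasureTheory ProbabilityTheory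
open scoped ENNReal

/-- The arcsine (Chebyshev invariant) distribution on (−1,1), with density
1/(π√(1−x²)) for |x| < 1 and 0 otherwise. -/
noncomputable def arcsineMeasure : Measure ℝ :=
  volume.withDensity fun x =>
    ENNReal.ofReal (if |x| < 1 then 1 / (Real.pi * Real.sqrt (1 - x ^ 2)) else 0)

/-- The uniform distribution on {−1, +1}. -/
noncomputable def rademacherMeasure : Measure ℝ :=
  (1 / 2 : ℝ≥0∞) • Measure.dirac (-1) + (1 / 2 : ℝ≥0∞) • Measure.dirac 1

open Real Set Filter Topology

theorem essSup_eq_of_ae_le_of_forall_lt {α : Type*} {m : MeasurableSpace α} {μ : Measure α}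
    {f : α → ℝ} {c : ℝ} (hle : ∀ᵐ a ∂μ, f a ≤ c) (hlt : ∀ b < c, μ {a | b < f a} ≠ 0) :
    essSup f μ = c := by
  rw [essSup_eq_sInf, ← csInf_Ici (a := c)]
  congr 1
  ext b
  refine ⟨fun hb => not_lt.1 fun hbc => hlt b hbc hb, fun hcb => ?_⟩
  refine measure_mono_null (fun a ha => ?_) (ae_iff.1 hle)
  exact not_le.2 (lt_of_le_of_lt (mem_Ici.1 hcb) ha)

namespace ProbabilityTheory

variable {Ω : Type*} [MeasurableSpace Ω] {μ : Measure Ω}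

theorem iIndepFun.measure_iInter_preimage_pos {ι : Type*} [Fintype ι] {κ : ι → Type*}
    [∀ i, MeasurableSpace (κ i)] {f : ∀ i, Ω → κ i} (hf : iIndepFun f μ) {A : ∀ i, Set (κ i)}
    (hA : ∀ i, MeasurableSet (A i)) (hpos : ∀ i, 0 < μ (f i ⁻¹' A i)) :
    0 < μ (⋂ i, f i ⁻¹' A i) := by
  rw [hf.meas_iInter fun i => ⟨A i, hA i, rfl⟩]
  exact CanonicallyOrderedAdd.prod_pos.2 fun i _ => hpos i

theorem iIndepFun.indepFun_sum_option_elim {ι : Type*} [Fintype ι] {x : ι → Ω → ℝ} {d : Ω → ℝ}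
    (h : iIndepFun (fun i : Option ι => i.elim d x) μ) (hx : ∀ i, Measurable (x i))
    (hd : Measurable d) :
    (fun ω => ∑ i, x i ω) ⟂ᵢ[μ] d := by
  have hmeas : ∀ i : Option ι, Measurable (i.elim d x) := by
    rintro (_ | i)
    exacts [hd, hx i]
  convert h.indepFun_finsetSum_of_notMem hmeas (s := Finset.univ.map .some)
    (i := none) (by simp) using 1
  · ext ω
    simp
  · rfl

theorem integral_sq_sum_of_indepFun {ι : Type*} [IsFiniteMeasure μ] {X : ι → Ω → ℝ}
    {s : Finset ι} (hX : ∀ i ∈ s, MemLp (X i) 2 μ)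
    (hindep : Set.Pairwise s fun i j => X i ⟂ᵢ[μ] X j) (hmean : ∀ i ∈ s, μ[X i] = 0) :
    ∫ ω, (∑ i ∈ s, X i ω) ^ 2 ∂μ = ∑ i ∈ s, ∫ ω, X i ω ^ 2 ∂μ := by
  have hsum : MemLp (∑ i ∈ s, X i) 2 μ := memLp_finsetSum' s hX
  have hsum_mean : μ[∑ i ∈ s, X i] = 0 := by
    simp only [Finset.sum_apply]
    rw [integral_finsetSum s fun i hi => (hX i hi).integrable one_le_two]
    exact Finset.sum_eq_zero hmean
  calc ∫ ω, (∑ i ∈ s, X i ω) ^ 2 ∂μ = variance (∑ i ∈ s, X i) μ := by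
        rw [variance_of_integral_eq_zero hsum.aemeasurable hsum_mean]
        simp only [Finset.sum_apply]
    _ = ∑ i ∈ s, variance (X i) μ := IndepFun.variance_sum hX hindep
    _ = ∑ i ∈ s, ∫ ω, X i ω ^ 2 ∂μ := Finset.sum_congr rfl fun i hi =>
        variance_of_integral_eq_zero (hX i hi).aemeasurable (hmean i hi)

end ProbabilityTheory

noncomputable def arcsineDensity (t : ℝ) : ℝ :=
  if |t| < 1 then 1 / (π * √(1 - t ^ 2)) else 0

theorem arcsineMeasure_eq_withDensity :
    arcsineMeasure = volume.withDensity fun t => ENNReal.ofReal (arcsineDensity t) :=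
  rfl

theorem arcsineDensity_nonneg (t : ℝ) : 0 ≤ arcsineDensity t := by
  unfold arcsineDensity
  split_ifs <;> positivity

theorem measurable_arcsineDensity : Measurable arcsineDensity :=
  Measurable.ite (measurableSet_lt measurable_abs measurable_const) (by fun_prop) measurable_const

theorem integral_arcsineMeasure (g : ℝ → ℝ) :
    ∫ t, g t ∂arcsineMeasure = (∫ θ in Ioo (-(π / 2)) (π / 2), g (sin θ)) / π := by
  have hdens : (fun t => (ENNReal.ofReal (arcsineDensity t)).toReal • g t)
      = (Ioo (-1) 1).indicator fun t => g t / (π * √(1 - t ^ 2)) := by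
    ext t
    rw [ENNReal.toReal_ofReal (arcsineDensity_nonneg t), smul_eq_mul, indicator_apply]
    simp only [arcsineDensity, mem_Ioo, ← abs_lt]
    split_ifs <;> simp [div_eq_inv_mul]
  have hsin : ∀ θ ∈ Ioo (-(π / 2)) (π / 2),
      |cos θ| • (g (sin θ) / (π * √(1 - sin θ ^ 2))) = g (sin θ) / π := by
    intro θ hθ
    have hcos : 0 < cos θ := cos_pos_of_mem_Ioo hθ
    rw [← abs_cos_eq_sqrt_one_sub_sin_sq, abs_of_pos hcos, smul_eq_mul]
    field_simp
  have himage : sin '' Ioo (-(π / 2)) (π / 2) = Ioo (-1) 1 :=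
    sinPartialHomeomorph.image_source_eq_target
  rw [arcsineMeasure_eq_withDensity,
    integral_withDensity_eq_integral_toReal_smul measurable_arcsineDensity.ennreal_ofReal
    (ae_of_all _ fun _ => ENNReal.ofReal_lt_top), hdens, integral_indicator measurableSet_Ioo,
    ← himage,
    integral_image_eq_integral_abs_deriv_smul measurableSet_Ioo
      (fun θ _ => (hasDerivAt_sin θ).hasDerivWithinAt) (injOn_sin.mono Ioo_subset_Icc_self),
    setIntegral_congr_fun measurableSet_Ioo hsin, integral_div]

theorem integral_id_arcsineMeasure : ∫ t, t ∂arcsineMeasure = 0 := by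
  rw [integral_arcsineMeasure, ← integral_Ioc_eq_integral_Ioo,
    ← intervalIntegral.integral_of_le (by linarith [pi_pos])]
  simp [integral_sin]

theorem integral_sq_arcsineMeasure : ∫ t, t ^ 2 ∂arcsineMeasure = 1 / 2 := by
  rw [integral_arcsineMeasure, ← integral_Ioc_eq_integral_Ioo,
    ← intervalIntegral.integral_of_le (by linarith [pi_pos]), integral_sin_sq]
  simp only [sin_neg, sin_pi_div_two, cos_neg, cos_pi_div_two]
  field_simp
  ring

theorem ae_abs_lt_one_arcsineMeasure : ∀ᵐ t ∂arcsineMeasure, |t| < 1 := by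
  rw [arcsineMeasure_eq_withDensity, ae_withDensity_iff measurable_arcsineDensity.ennreal_ofReal]
  refine ae_of_all _ fun t ht => not_le.1 fun h1 => ht ?_
  simp [arcsineDensity, not_lt.2 h1]

theorem arcsineMeasure_Ioi_pos {r : ℝ} (hr : r < 1) : 0 < arcsineMeasure (Ioi r) := by
  have hsupp : Ioo (max r (-1)) 1 ⊆
      Function.support (fun t => ENNReal.ofReal (arcsineDensity t)) ∩ Ioi r := by
    rintro t ⟨hrt, ht1⟩
    rw [max_lt_iff] at hrt
    have habs : |t| < 1 := abs_lt.2 ⟨hrt.2, ht1⟩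
    have hsq : 0 < 1 - t ^ 2 := by nlinarith [abs_lt.1 habs]
    refine ⟨?_, hrt.1⟩
    simp only [arcsineDensity, Function.mem_support, if_pos habs, ne_eq, ENNReal.ofReal_eq_zero,
      not_le]
    positivity
  rw [arcsineMeasure_eq_withDensity, withDensity_apply _ measurableSet_Ioi,
    setLIntegral_pos_iff measurable_arcsineDensity.ennreal_ofReal]
  refine lt_of_lt_of_le ?_ (measure_mono hsupp)
  simpa using max_lt hr (neg_lt_self one_pos)

theorem integral_rademacherMeasure (g : ℝ → ℝ) :
    ∫ t, g t ∂rademacherMeasure = (g (-1) + g 1) / 2 := by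
  rw [rademacherMeasure, integral_add_measure, integral_smul_measure, integral_smul_measure,
    integral_dirac, integral_dirac]
  · simp only [one_div, ENNReal.toReal_inv, ENNReal.toReal_ofNat, smul_eq_mul]
    ring
  all_goals exact (integrable_dirac enorm_lt_top).smul_measure (by simp)

theorem ae_rademacherMeasure : ∀ᵐ t ∂rademacherMeasure, t = -1 ∨ t = 1 := by
  simp [rademacherMeasure]

theorem rademacherMeasure_singleton_one : rademacherMeasure {1} = 1 / 2 := by
  norm_num [rademacherMeasure]

section DCSK

variable {Ω ι : Type*} [MeasurableSpace Ω] {P : Measure Ω} [Fintype ι] {x : ι → Ω → ℝ}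
  {d : Ω → ℝ}

theorem integral_sq_sum_of_map_eq_arcsineMeasure [IsFiniteMeasure P]
    (hx : ∀ i, Measurable (x i)) (hlaw : ∀ i, P.map (x i) = arcsineMeasure)
    (hindep : Pairwise fun i j => x i ⟂ᵢ[P] x j) :
    ∫ ω, (∑ i, x i ω) ^ 2 ∂P = Fintype.card ι / 2 := by
  have hmoment : ∀ i (g : ℝ → ℝ), Continuous g → ∫ ω, g (x i ω) ∂P = ∫ t, g t ∂arcsineMeasure :=
    fun i g hg => by
      rw [← hlaw i, integral_map (hx i).aemeasurable hg.aestronglyMeasurable]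
  have hbound : ∀ i, ∀ᵐ ω ∂P, |x i ω| < 1 := fun i =>
    ae_of_ae_map (hx i).aemeasurable (hlaw i ▸ ae_abs_lt_one_arcsineMeasure)
  have hmemLp : ∀ i ∈ Finset.univ, MemLp (x i) 2 P := fun i _ =>
    MemLp.of_bound (hx i).aestronglyMeasurable 1 <| (hbound i).mono fun ω h => h.le
  have hmean : ∀ i ∈ Finset.univ, ∫ ω, x i ω ∂P = 0 := fun i _ =>
    (hmoment i id continuous_id).trans integral_id_arcsineMeasure
  have hsecond : ∀ i, ∫ ω, x i ω ^ 2 ∂P = 1 / 2 := fun i =>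
    (hmoment i (· ^ 2) (continuous_pow 2)).trans integral_sq_arcsineMeasure
  rw [integral_sq_sum_of_indepFun hmemLp (fun i _ j _ hij => hindep hij) hmean]
  simp only [hsecond, Finset.sum_const, Finset.card_univ, nsmul_eq_mul]
  ring

theorem integral_sq_one_add_mul_sum [IsFiniteMeasure P] (hx : ∀ i, Measurable (x i))
    (hd : Measurable d) (hxlaw : ∀ i, P.map (x i) = arcsineMeasure)
    (hdlaw : P.map d = rademacherMeasure)
    (hindep : iIndepFun (fun i : Option ι => i.elim d x) P) :
    ∫ ω, ((1 + d ω) * ∑ i, x i ω) ^ 2 ∂P = (Fintype.card ι : ℝ) := by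
  have hpair : Pairwise fun i j => x i ⟂ᵢ[P] x j := fun i j hij =>
    hindep.indepFun (Option.some_injective _ |>.ne hij)
  have hsum : (fun ω => ∑ i, x i ω) ⟂ᵢ[P] d := hindep.indepFun_sum_option_elim hx hd
  have hd_moment : ∫ ω, (1 + d ω) ^ 2 ∂P = 2 := by
    have hg : Continuous fun t : ℝ => (1 + t) ^ 2 := by fun_prop
    rw [← integral_map hd.aemeasurable hg.aestronglyMeasurable, hdlaw,
      integral_rademacherMeasure]
    norm_num
  calc ∫ ω, ((1 + d ω) * ∑ i, x i ω) ^ 2 ∂P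
      = (∫ ω, (1 + d ω) ^ 2 ∂P) * ∫ ω, (∑ i, x i ω) ^ 2 ∂P := by
        simp_rw [mul_pow]
        have hsq := hsum.symm.comp (φ := fun t => (1 + t) ^ 2) (ψ := fun t => t ^ 2)
          (by fun_prop) (by fun_prop)
        exact hsq.integral_fun_mul_eq_mul_integral (by fun_prop) (by fun_prop)
    _ = Fintype.card ι := by
        rw [hd_moment, integral_sq_sum_of_map_eq_arcsineMeasure hx hxlaw hpair]
        ring

theorem ae_sq_one_add_mul_sum_le (hx : ∀ i, Measurable (x i)) (hd : Measurable d)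
    (hxlaw : ∀ i, P.map (x i) = arcsineMeasure) (hdlaw : P.map d = rademacherMeasure) :
    ∀ᵐ ω ∂P, ((1 + d ω) * ∑ i, x i ω) ^ 2 ≤ 4 * (Fintype.card ι : ℝ) ^ 2 := by
  have hxbound : ∀ᵐ ω ∂P, ∀ i, |x i ω| < 1 := ae_all_iff.2 fun i =>
    ae_of_ae_map (hx i).aemeasurable (hxlaw i ▸ ae_abs_lt_one_arcsineMeasure)
  have hdvalues : ∀ᵐ ω ∂P, d ω = -1 ∨ d ω = 1 :=
    ae_of_ae_map hd.aemeasurable (hdlaw ▸ ae_rademacherMeasure)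
  filter_upwards [hxbound, hdvalues] with ω hxω hdω
  have hsum : |∑ i, x i ω| ≤ Fintype.card ι := by
    calc |∑ i, x i ω| ≤ ∑ i, |x i ω| := Finset.abs_sum_le_sum_abs _ _
      _ ≤ Finset.univ.card • (1 : ℝ) := Finset.sum_le_card_nsmul _ _ _ fun i _ => (hxω i).le
      _ = Fintype.card ι := by simp
  rcases hdω with hdω | hdω <;> rw [hdω]
  · simp
  · nlinarith [abs_le.1 hsum]

theorem measure_lt_sq_one_add_mul_sum_ne_zero (hx : ∀ i, Measurable (x i)) (hd : Measurable d)
    (hxlaw : ∀ i, P.map (x i) = arcsineMeasure) (hdlaw : P.map d = rademacherMeasure)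
    (hindep : iIndepFun (fun i : Option ι => i.elim d x) P) {b : ℝ}
    (hb : b < 4 * (Fintype.card ι : ℝ) ^ 2) :
    P {ω | b < ((1 + d ω) * ∑ i, x i ω) ^ 2} ≠ 0 := by
  obtain ⟨r, hbr, hr⟩ : ∃ r : ℝ, b < (2 * Fintype.card ι * r) ^ 2 ∧ r ∈ Ioo 0 1 := by
    have hlim : Tendsto (fun r : ℝ => (2 * Fintype.card ι * r) ^ 2) (𝓝[<] 1)
        (𝓝 ((2 * Fintype.card ι * 1 : ℝ) ^ 2)) :=
      ((by fun_prop : Continuous fun r : ℝ => (2 * Fintype.card ι * r) ^ 2).tendsto 1).mono_left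
        nhdsWithin_le_nhds
    exact ((hlim.eventually_const_lt (by linarith)).and (Ioo_mem_nhdsLT one_pos)).exists
  let A : Option ι → Set ℝ := fun i => i.elim {1} fun _ => Ioi r
  have hpos := hindep.measure_iInter_preimage_pos (A := A)
    (by rintro (_ | i); exacts [measurableSet_singleton 1, measurableSet_Ioi]) <| by
      rintro (_ | i)
      · show 0 < P (d ⁻¹' {1})
        rw [← Measure.map_apply hd (measurableSet_singleton 1), hdlaw,
          rademacherMeasure_singleton_one]
        norm_num
      · show 0 < P (x i ⁻¹' Ioi r)
        rw [← Measure.map_apply (hx i) measurableSet_Ioi, hxlaw i]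
        exact arcsineMeasure_Ioi_pos hr.2
  refine (pos_iff_ne_zero.1 hpos) ∘ measure_mono_null fun ω hω => ?_
  have hdω : d ω = 1 := mem_iInter.1 hω none
  have hxω : ∀ i, r < x i ω := fun i => mem_iInter.1 hω (some i)
  have hsum : Fintype.card ι * r ≤ ∑ i, x i ω := by
    calc (Fintype.card ι : ℝ) * r = Finset.univ.card • r := by simp
      _ ≤ ∑ i, x i ω := Finset.card_nsmul_le_sum _ _ _ fun i _ => (hxω i).le
  show b < ((1 + d ω) * ∑ i, x i ω) ^ 2
  rw [hdω]
  calc b < (2 * Fintype.card ι * r) ^ 2 := hbr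
    _ ≤ ((1 + 1) * ∑ i, x i ω) ^ 2 :=
      pow_le_pow_left₀ (mul_nonneg (by positivity) hr.1.le) (by linarith) 2

end DCSK

theorem stmt_1_general {Ω : Type*} [MeasurableSpace Ω] (P : Measure Ω) [IsProbabilityMeasure P]
    (β : ℕ) (x : Fin β → Ω → ℝ) (d : Ω → ℝ)
    (hxmeas : ∀ k, Measurable (x k)) (hdmeas : Measurable d)
    (hxlaw : ∀ k, Measure.map (x k) P = arcsineMeasure)
    (hdlaw : Measure.map d P = rademacherMeasure)
    (hindep : iIndepFun
      (fun i : Option (Fin β) => i.elim d x) P)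
    (s : Fin (β + β) → Ω → ℝ)
    (hsum : ∀ ω, ∑ k, s k ω = (1 + d ω) * ∑ k, x k ω) :
    essSup (fun ω => (∑ k, s k ω) ^ 2) P = 4 * (β : ℝ) ^ 2 ∧
    (∫ ω, (∑ k, s k ω) ^ 2 ∂P) = (β : ℝ) ∧
    essSup (fun ω => (∑ k, s k ω) ^ 2) P / (∫ ω, (∑ k, s k ω) ^ 2 ∂P) = 4 * (β : ℝ) := by
  have hess : essSup (fun ω => (∑ k, s k ω) ^ 2) P = 4 * (β : ℝ) ^ 2 := by
    simp only [hsum]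
    simpa using essSup_eq_of_ae_le_of_forall_lt
      (ae_sq_one_add_mul_sum_le hxmeas hdmeas hxlaw hdlaw)
      fun b hb => measure_lt_sq_one_add_mul_sum_ne_zero hxmeas hdmeas hxlaw hdlaw hindep hb
  have hint : ∫ ω, (∑ k, s k ω) ^ 2 ∂P = β := by
    simp only [hsum]
    simpa using integral_sq_one_add_mul_sum hxmeas hdmeas hxlaw hdlaw hindep
  refine ⟨hess, hint, ?_⟩
  rw [hess, hint, sq, mul_div_assoc, mul_self_div_self]

/-- for the DCSK chips s_k, the correlator output Σ_{k=1}^{2β} s_k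
(= (1+d)·Σ_{k=1}^{β} x_k) has essential supremum of its square equal to 4β²,
expectation of its square equal to β, and hence PAPR equal to 4β. -/
theorem stmt_1 {Ω : Type*} [MeasurableSpace Ω] (P : Measure Ω) [IsProbabilityMeasure P]
    (β : ℕ) (hβ : 0 < β) (x : Fin β → Ω → ℝ) (d : Ω → ℝ)
    (hxmeas : ∀ k, Measurable (x k)) (hdmeas : Measurable d)
    (hxlaw : ∀ k, Measure.map (x k) P = arcsineMeasure)
    (hdlaw : Measure.map d P = rademacherMeasure)
    (hindep : iIndepFun
      (fun i : Option (Fin β) => i.elim d x) P)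
    (s : Fin (β + β) → Ω → ℝ)
    (hs : s = Fin.addCases (fun k => x k) (fun k ω => d ω * x k ω))
    (hsum : ∀ ω, ∑ k, s k ω = (1 + d ω) * ∑ k, x k ω) :
    essSup (fun ω => (∑ k, s k ω) ^ 2) P = 4 * (β : ℝ) ^ 2 ∧
    (∫ ω, (∑ k, s k ω) ^ 2 ∂P) = (β : ℝ) ∧
    essSup (fun ω => (∑ k, s k ω) ^ 2) P / (∫ ω, (∑ k, s k ω) ^ 2 ∂P) = 4 * (β : ℝ) :=
  stmt_1_general P β x d hxmeas hdmeas hxlaw hdlaw hindep s hsum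
end

section
/- Let m₁ ≥ 1 and m₂ ≥ 1 be real numbers, ε₂ > 0, and β > 0 a real number. Define Δ = ε₂·(3(1+m₁)/m₁)·β·(2β−1) − ε₂·(3(1+m₂)/m₂)·β·(β − 1/4) and β_opt = (4m₂ + 3m₁m₂ − m₁) / (4·(2m₂ + m₁m₂ − m₁)). Then 2(1+m₁)/m₁ − (1+m₂)/m₂ > 0, and Δ > 0 if and only if β > β_opt. -/
/-- the gap Δ = z_MC − z_UM,C is positive if and only if the
spreading factor β exceeds β_opt. -/
theorem stmt_10 (m₁ m₂ : ℝ) (hm₁ : 1 ≤ m₁) (hm₂ : 1 ≤ m₂) (ε₂ : ℝ) (hε₂ : 0 < ε₂)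
    (β : ℝ) (hβ : 0 < β) (Δ βopt : ℝ)
    (hΔ : Δ = ε₂ * (3 * (1 + m₁) / m₁) * β * (2 * β - 1)
        - ε₂ * (3 * (1 + m₂) / m₂) * β * (β - 1 / 4))
    (hβopt : βopt = (4 * m₂ + 3 * m₁ * m₂ - m₁) / (4 * (2 * m₂ + m₁ * m₂ - m₁))) :
    2 * (1 + m₁) / m₁ - (1 + m₂) / m₂ > 0 ∧ (Δ > 0 ↔ β > βopt) := by
  have hm1 : (0:ℝ) < m₁ := lt_of_lt_of_le one_pos hm₁
  have hm2 : (0:ℝ) < m₂ := lt_of_lt_of_le one_pos hm₂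
  have hD : (0:ℝ) < 4 * (2 * m₂ + m₁ * m₂ - m₁) := by nlinarith
  have hc : (0:ℝ) < 3 * ε₂ * β := by positivity
  have hΔ' : Δ * (m₁ * m₂) = 3 * ε₂ * β *
      (m₂ * (1 + m₁) * (2 * β - 1) - m₁ * (1 + m₂) * (β - 1 / 4)) := by
    rw [hΔ]; field_simp
  constructor
  · rw [gt_iff_lt, sub_pos, div_lt_div_iff₀ hm2 hm1]
    nlinarith
  · rw [gt_iff_lt, gt_iff_lt, hβopt, div_lt_iff₀ hD]
    constructor
    · intro h
      have h2 : 0 < Δ * (m₁ * m₂) := by positivity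
      rw [hΔ'] at h2
      have hP : 0 < m₂ * (1 + m₁) * (2 * β - 1) - m₁ * (1 + m₂) * (β - 1 / 4) := by
        by_contra hP
        push_neg at hP
        nlinarith [mul_nonneg hc.le (neg_nonneg.2 hP)]
      linarith
    · intro h
      have hP : 0 < m₂ * (1 + m₁) * (2 * β - 1) - m₁ * (1 + m₂) * (β - 1 / 4) := by
        linarith
      have h2 : 0 < Δ * (m₁ * m₂) := by rw [hΔ']; exact mul_pos hc hP
      nlinarith [mul_pos hm1 hm2]
end

section
/- Let β ≥ 3 be an integer, m ≥ 1 a real number, and ε₁ ≥ 0, ε₂ ≥ 0 reals. For each positive integer β_r dividing β, with ζ = β/β_r, define z_SR(β_r) = ε₁·(β_r² + β²)/(2β_r) + ε₂·(3(1+m)/(8m))·(1 + 6ζ² + ζ⁴)·(2β_r² − β_r). Then z_SR(β_r) ≤ z_SR(1) for every such divisor β_r, i.e. the harvested DC is maximized at β_r = 1, with optimal value z_SR(1) = (1/2)·ε₁·(1 + β²) + (3(1+m)/(8m))·ε₂·(1 + 6β² + β⁴). -/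
set_option maxHeartbeats 1600000 in
/-- for β ≥ 3, among all divisors β_r of β (with ζ = β / β_r),
the SR-DCSK harvested DC z_SR(β_r) is maximized at β_r = 1, where it equals
(1/2)ε₁(1 + β²) + (3(1+m)/(8m))ε₂(1 + 6β² + β⁴). -/
theorem stmt_14 (β : ℕ) (hβ : 3 ≤ β) (m : ℝ) (hm : 1 ≤ m)
    (ε₁ ε₂ : ℝ) (hε₁ : 0 ≤ ε₁) (hε₂ : 0 ≤ ε₂)
    (zSR : ℕ → ℝ)
    (hzSR : ∀ βr : ℕ, 0 < βr → βr ∣ β →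
      zSR βr = ε₁ * (((βr : ℝ) ^ 2 + (β : ℝ) ^ 2) / (2 * (βr : ℝ)))
        + ε₂ * (3 * (1 + m) / (8 * m))
          * (1 + 6 * ((β / βr : ℕ) : ℝ) ^ 2 + ((β / βr : ℕ) : ℝ) ^ 4)
          * (2 * (βr : ℝ) ^ 2 - (βr : ℝ))) :
    (∀ βr : ℕ, 0 < βr → βr ∣ β → zSR βr ≤ zSR 1) ∧
    zSR 1 = (1 / 2) * ε₁ * (1 + (β : ℝ) ^ 2)
      + (3 * (1 + m) / (8 * m)) * ε₂ * (1 + 6 * (β : ℝ) ^ 2 + (β : ℝ) ^ 4) := by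
  have hβ0 : 0 < β := by omega
  have h1div : (1 : ℕ) ∣ β := one_dvd β
  have hz1 : zSR 1 = (1 / 2) * ε₁ * (1 + (β : ℝ) ^ 2)
      + (3 * (1 + m) / (8 * m)) * ε₂ * (1 + 6 * (β : ℝ) ^ 2 + (β : ℝ) ^ 4) := by
    rw [hzSR 1 one_pos h1div]
    simp
    ring
  refine ⟨?_, hz1⟩
  intro βr hpos hdvd
  rw [hzSR βr hpos hdvd, hz1]
  set r : ℝ := (βr : ℝ) with hr
  set ζ : ℝ := ((β / βr : ℕ) : ℝ) with hζ
  have hbr : (β : ℝ) = ζ * r := by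
    rw [hζ, hr, ← Nat.cast_mul]
    norm_cast
    exact (Nat.div_mul_cancel hdvd).symm
  have hr1 : (1 : ℝ) ≤ r := Nat.one_le_cast.mpr hpos
  have hζpos : 0 < β / βr := Nat.div_pos (Nat.le_of_dvd hβ0 hdvd) hpos
  have hζ1 : (1 : ℝ) ≤ ζ := Nat.one_le_cast.mpr hζpos
  have hb3 : (3 : ℝ) ≤ ζ * r := by
    rw [← hbr]; exact_mod_cast hβ
  have hm0 : 0 < m := lt_of_lt_of_le one_pos hm
  have hC : 0 ≤ 3 * (1 + m) / (8 * m) := by positivity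
  have hr0 : (0 : ℝ) < r := lt_of_lt_of_le one_pos hr1
  rw [hbr]
  have t1 : ε₁ * ((r ^ 2 + (ζ * r) ^ 2) / (2 * r)) ≤ (1/2) * ε₁ * (1 + (ζ * r) ^ 2) := by
    have key1 : (r ^ 2 + (ζ * r) ^ 2) / (2 * r) ≤ (1 + (ζ * r) ^ 2) / 2 := by
      rw [div_le_div_iff₀ (by positivity) (by norm_num)]
      have hζ2 : (1 : ℝ) ≤ ζ ^ 2 := by nlinarith
      have hrle : r ≤ ζ ^ 2 * r ^ 2 := by
        nlinarith [mul_le_mul_of_nonneg_right hζ2 (sq_nonneg r),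
          mul_nonneg (sub_nonneg.2 hr1) hr0.le]
      nlinarith [mul_nonneg (sub_nonneg.2 hr1) (sub_nonneg.2 hrle)]
    calc ε₁ * ((r ^ 2 + (ζ * r) ^ 2) / (2 * r)) ≤ ε₁ * ((1 + (ζ * r) ^ 2) / 2) :=
          mul_le_mul_of_nonneg_left key1 hε₁
      _ = (1/2) * ε₁ * (1 + (ζ * r) ^ 2) := by ring
  have key : (1 + 6 * ζ ^ 2 + ζ ^ 4) * (2 * r ^ 2 - r)
      ≤ 1 + 6 * (ζ * r) ^ 2 + (ζ * r) ^ 4 := by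
    rcases eq_or_ne βr 1 with h1 | h1
    · have : r = 1 := by rw [hr, h1]; norm_num
      rw [this]; ring_nf; nlinarith []
    · have h2 : (2 : ℝ) ≤ r := by
        rw [hr]; exact_mod_cast (by omega : 2 ≤ βr)
      rcases eq_or_ne (β / βr) 1 with hq | hq
      · have hζeq : ζ = 1 := by rw [hζ, hq]; norm_num
        have h3 : (3 : ℝ) ≤ r := by rw [hζeq] at hb3; linarith
        rw [hζeq]
        nlinarith [sq_nonneg (r ^ 2 - 5), h3]
      · have hz2 : (2 : ℝ) ≤ ζ := by
          rw [hζ]; exact_mod_cast (by omega : 2 ≤ β / βr)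
        have hu : (4 : ℝ) ≤ ζ ^ 2 := by nlinarith
        have hv : (4 : ℝ) ≤ r ^ 2 := by nlinarith
        have s1 : 6 * ζ ^ 2 * r ^ 2 + 2 * r ^ 2 ≤ 8 * (ζ ^ 2 * r ^ 2) := by
          nlinarith [mul_nonneg (sub_nonneg.2 hu) (sq_nonneg r), sq_nonneg r]
        have s2 : 8 * (ζ ^ 2 * r ^ 2) ≤ 2 * (ζ ^ 4 * r ^ 2) := by
          nlinarith [mul_nonneg (sub_nonneg.2 hu) (mul_nonneg (sq_nonneg ζ) (sq_nonneg r))]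
        have s3 : 2 * (ζ ^ 4 * r ^ 2) ≤ ζ ^ 4 * (r ^ 4 - 2 * r ^ 2) := by
          nlinarith [mul_nonneg (sub_nonneg.2 hv)
            (mul_nonneg (mul_nonneg (sq_nonneg ζ) (sq_nonneg ζ)) (sq_nonneg r))]
        have hA1 : 6 * ζ ^ 2 * r ^ 2 + 2 * r ^ 2 ≤ ζ ^ 4 * (r ^ 4 - 2 * r ^ 2) := by
          linarith
        have hB1 : (0 : ℝ) ≤ 1 + r + 6 * ζ ^ 2 * r + ζ ^ 4 * r := by positivity
        nlinarith [hA1, hB1]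
  have t2 : ε₂ * (3 * (1 + m) / (8 * m)) * (1 + 6 * ζ ^ 2 + ζ ^ 4) * (2 * r ^ 2 - r)
      ≤ (3 * (1 + m) / (8 * m)) * ε₂ * (1 + 6 * (ζ * r) ^ 2 + (ζ * r) ^ 4) := by
    calc ε₂ * (3 * (1 + m) / (8 * m)) * (1 + 6 * ζ ^ 2 + ζ ^ 4) * (2 * r ^ 2 - r)
        = (ε₂ * (3 * (1 + m) / (8 * m))) * ((1 + 6 * ζ ^ 2 + ζ ^ 4) * (2 * r ^ 2 - r)) := by ring
      _ ≤ (ε₂ * (3 * (1 + m) / (8 * m))) * (1 + 6 * (ζ * r) ^ 2 + (ζ * r) ^ 4) :=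
          mul_le_mul_of_nonneg_left key (mul_nonneg hε₂ hC)
      _ = (3 * (1 + m) / (8 * m)) * ε₂ * (1 + 6 * (ζ * r) ^ 2 + (ζ * r) ^ 4) := by ring
  linarith
end
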